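/- arXiv:1406.6650 — 3 statements merged into one kernel-verified Lean document; each statement's English description precedes it below -/
import Mathlib

section
/- Let E be a set, A a set of pairs (f,g) of bounded functions E → ℝ, λ > 0, and h, h_n bounded functions with sup_x |h_n(x) - h(x)| → 0, where each h_n = λ f_n - g_n for some (f_n, g_n) ∈ A. Suppose u is a 'sequential viscosity subsolution' of λu - Au = h, i.e., for each (f,g) ∈ A and each sequence y_n in E with (u-f)(y_n) → sup_x (u-f)(x), we have limsup_n (λ u(y_n) - g(y_n) - h(y_n)) ≤ 0. Then sup_x (λ u(x) - λ f_n(x)) has limsup ≤ 0 as n → ∞; more precisely, limsup_n sup_x (u(x) - f_n(x)) ≤ 0 (after division by λ). -/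
open Filter

private lemma limsup_nonpos_of_all_pos {v : ℕ → ℝ}
    (hv : ∀ c : ℝ, 0 < c → ∀ᶠ n in atTop, v n ≤ c) :
    limsup v atTop ≤ 0 := by
  rw [limsup, limsSup]
  simp only [eventually_map]
  by_cases hb : BddBelow {a : ℝ | ∀ᶠ n in atTop, v n ≤ a}
  · refine le_of_forall_pos_le_add fun ε hε => ?_
    have : ε ∈ {a : ℝ | ∀ᶠ n in atTop, v n ≤ a} := hv ε hε
    have := csInf_le hb this
    linarith
  · rw [Real.sInf_of_not_bddBelow hb]

/-- If `h_n = λ f_n - g_n` with `(f_n,g_n) ∈ A` converge uniformly to `h`,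
and `u` is a sequential viscosity subsolution of `λ u - A u = h`, then
`limsup_n sup_x (λ u(x) - λ f_n(x)) ≤ 0`, and also `limsup_n sup_x (u(x) - f_n(x)) ≤ 0`. -/
theorem stmt0 {E : Type*} [Nonempty E]
    (A : Set ((E → ℝ) × (E → ℝ)))
    (hA : ∀ p ∈ A, (∃ M, ∀ x, |p.1 x| ≤ M) ∧ (∃ M, ∀ x, |p.2 x| ≤ M))
    (lam : ℝ) (hlam : 0 < lam)
    (h u : E → ℝ) (hh : ∃ M, ∀ x, |h x| ≤ M) (hu : ∃ M, ∀ x, |u x| ≤ M)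
    (f g : ℕ → E → ℝ) (hfg : ∀ n, (f n, g n) ∈ A)
    (happrox : Tendsto (fun n => ⨆ x, |lam * f n x - g n x - h x|) atTop (nhds 0))
    (hsub : ∀ p ∈ A, ∀ y : ℕ → E,
      Tendsto (fun n => u (y n) - p.1 (y n)) atTop (nhds (⨆ x, (u x - p.1 x))) →
      limsup (fun n => lam * u (y n) - p.2 (y n) - h (y n)) atTop ≤ 0) :
    limsup (fun n => ⨆ x, (lam * u x - lam * f n x)) atTop ≤ 0 ∧
    limsup (fun n => ⨆ x, (u x - f n x)) atTop ≤ 0 := by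
  obtain ⟨Mu, hMu⟩ := hu
  obtain ⟨Mh, hMh⟩ := hh
  set ε : ℕ → ℝ := fun n => ⨆ x, |lam * f n x - g n x - h x| with hε
  -- key estimate: lam * sup (u - f n) ≤ ε n
  have key : ∀ n, lam * (⨆ x, (u x - f n x)) ≤ ε n := by
    intro n
    obtain ⟨⟨M1, hM1⟩, ⟨M2, hM2⟩⟩ := hA _ (hfg n)
    have bddφ : BddAbove (Set.range fun x => u x - f n x) := by
      refine ⟨Mu + M1, ?_⟩
      rintro _ ⟨x, rfl⟩
      have := abs_le.1 (hMu x); have := abs_le.1 (hM1 x)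
      simp only at *
      linarith
    have bddabs : BddAbove (Set.range fun x => |lam * f n x - g n x - h x|) := by
      refine ⟨lam * M1 + M2 + Mh, ?_⟩
      rintro _ ⟨x, rfl⟩
      have h1 := abs_le.1 (hM1 x); have h2 := abs_le.1 (hM2 x)
      have h3 := abs_le.1 (hMh x)
      have hlf : |lam * f n x| ≤ lam * M1 := by
        rw [abs_mul, abs_of_pos hlam]
        exact mul_le_mul_of_nonneg_left (hM1 x) hlam.le
      have hab : |lam * f n x - g n x - h x| ≤ |lam * f n x| + |g n x| + |h x| := by
        calc |lam * f n x - g n x - h x| ≤ |lam * f n x - g n x| + |h x| := abs_sub _ _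
          _ ≤ |lam * f n x| + |g n x| + |h x| := by linarith [abs_sub (lam * f n x) (g n x)]
      have := hM2 x; have := hMh x
      simp only at *
      linarith
    have habs : ∀ x, |lam * f n x - g n x - h x| ≤ ε n := fun x =>
      le_ciSup bddabs x
    -- extract maximizing sequence
    obtain ⟨w, -, hwt, hwm⟩ := exists_seq_tendsto_sSup
      (S := Set.range fun x => u x - f n x) (Set.range_nonempty _) bddφ
    choose y hy using hwm
    have hyt : Tendsto (fun k => u (y k) - f n (y k)) atTop
        (nhds (⨆ x, (u x - f n x))) := by
      have : (fun k => u (y k) - f n (y k)) = w := funext fun k => hy k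
      rw [this]
      exact hwt
    have hls := hsub (f n, g n) (hfg n) y hyt
    -- compare with the subsolution quantity
    set s := ⨆ x, (u x - f n x) with hs
    have hTbdd : IsBoundedUnder (· ≤ ·) atTop
        (fun k => lam * u (y k) - g n (y k) - h (y k)) := by
      refine isBoundedUnder_of ⟨lam * Mu + M2 + Mh, fun k => ?_⟩
      have h1 := abs_le.1 (hMu (y k)); have h2 := abs_le.1 (hM2 (y k))
      have h3 := abs_le.1 (hMh (y k))
      simp only at h1 h2 h3 ⊢
      nlinarith [hlam.le]
    have hat : Tendsto (fun k => lam * (u (y k) - f n (y k)) - ε n) atTop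
        (nhds (lam * s - ε n)) := (hyt.const_mul lam).sub_const _
    have hle : ∀ k, lam * (u (y k) - f n (y k)) - ε n ≤
        lam * u (y k) - g n (y k) - h (y k) := by
      intro k
      have h1 := habs (y k)
      have h2 := neg_abs_le (lam * f n (y k) - g n (y k) - h (y k))
      nlinarith
    have hcb : IsCoboundedUnder (· ≤ ·) atTop
        (fun k => lam * (u (y k) - f n (y k)) - ε n) :=
      (hat.isBoundedUnder_ge).isCoboundedUnder_le
    have := limsup_le_limsup (Eventually.of_forall hle) hcb hTbdd
    rw [hat.limsup_eq] at this
    linarith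
  have εto : Tendsto ε atTop (nhds 0) := happrox
  have bddφ' : ∀ n, BddAbove (Set.range fun x => u x - f n x) := by
    intro n
    obtain ⟨⟨M1, hM1⟩, -⟩ := hA _ (hfg n)
    refine ⟨Mu + M1, ?_⟩
    rintro _ ⟨x, rfl⟩
    have := abs_le.1 (hMu x); have := abs_le.1 (hM1 x)
    simp only at *
    linarith
  constructor
  · refine limsup_nonpos_of_all_pos fun c hc => ?_
    filter_upwards [εto.eventually_lt_const hc] with n hn
    refine ciSup_le fun x => ?_
    have h1 : u x - f n x ≤ ⨆ x, (u x - f n x) := le_ciSup (bddφ' n) x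
    have := key n
    nlinarith
  · refine limsup_nonpos_of_all_pos fun c hc => ?_
    have : (0:ℝ) < lam * c := by positivity
    filter_upwards [εto.eventually_lt_const this] with n hn
    have := key n
    have h2 : ⨆ x, (u x - f n x) ≤ c := by nlinarith
    exact h2
end

section
/- Let E be a set, A a set of pairs (f,g) of bounded real-valued functions on E, λ > 0, and h a bounded function. Suppose there exist (f_n, g_n) ∈ A with sup_x |λ f_n(x) - g_n(x) - h(x)| → 0. If u̲ is a sequential viscosity subsolution of λu - Au = h (for every (f,g) ∈ A and every sequence y_n with (u̲-f)(y_n) → sup(u̲-f), one has limsup (λ u̲(y_n) - g(y_n) - h(y_n)) ≤ 0) and ū is a sequential viscosity supersolution (for every (f,g) ∈ A and every sequence y_n with (ū-f)(y_n) → inf(ū-f), one has liminf (λ ū(y_n) - g(y_n) - h(y_n)) ≥ 0), then u̲(x) ≤ ū(x) for all x ∈ E. -/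
open Filter

lemma seq_sup {E : Type*} [Nonempty E] (φ : E → ℝ) (hb : BddAbove (Set.range φ)) :
    ∃ y : ℕ → E, Tendsto (fun k => φ (y k)) atTop (nhds (⨆ x, φ x)) := by
  have key : ∀ k : ℕ, ∃ z, (⨆ x, φ x) - 1/(k+1) < φ z := by
    intro k
    have h1 : (⨆ x, φ x) - 1/(k+1) < ⨆ x, φ x := by
      have : (0:ℝ) < 1/(k+1) := by positivity
      linarith
    exact exists_lt_of_lt_ciSup h1
  choose y hy using key
  refine ⟨y, tendsto_of_tendsto_of_tendsto_of_le_of_le (g := fun k : ℕ => (⨆ x, φ x) - 1/(k+1))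
    (h := fun _ : ℕ => ⨆ x, φ x) ?_ tendsto_const_nhds
    (fun k => (hy k).le) (fun k => le_ciSup hb (y k))⟩
  have h2 := (tendsto_const_nhds (x := (⨆ x, φ x)) (f := atTop (α := ℕ))).sub
    tendsto_one_div_add_atTop_nhds_zero_nat
  simpa using h2

lemma seq_inf {E : Type*} [Nonempty E] (φ : E → ℝ) (hb : BddBelow (Set.range φ)) :
    ∃ y : ℕ → E, Tendsto (fun k => φ (y k)) atTop (nhds (⨅ x, φ x)) := by
  have key : ∀ k : ℕ, ∃ z, φ z < (⨅ x, φ x) + 1/(k+1) := by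
    intro k
    have h1 : (⨅ x, φ x) < (⨅ x, φ x) + 1/(k+1) := by
      have : (0:ℝ) < 1/(k+1) := by positivity
      linarith
    exact exists_lt_of_ciInf_lt h1
  choose y hy using key
  refine ⟨y, tendsto_of_tendsto_of_tendsto_of_le_of_le (g := fun _ : ℕ => ⨅ x, φ x)
    (h := fun k : ℕ => (⨅ x, φ x) + 1/(k+1)) tendsto_const_nhds ?_
    (fun k => ciInf_le hb (y k)) (fun k => (hy k).le)⟩
  have h2 := (tendsto_const_nhds (x := (⨅ x, φ x)) (f := atTop (α := ℕ))).add
    tendsto_one_div_add_atTop_nhds_zero_nat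
  simpa using h2

/-- Comparison principle for sequential viscosity semisolutions when
`h` lies in the uniform closure of the range of `λ - A`. -/
theorem stmt1 {E : Type*} [Nonempty E]
    (A : Set ((E → ℝ) × (E → ℝ)))
    (hA : ∀ p ∈ A, (∃ M, ∀ x, |p.1 x| ≤ M) ∧ (∃ M, ∀ x, |p.2 x| ≤ M))
    (lam : ℝ) (hlam : 0 < lam)
    (h : E → ℝ) (hh : ∃ M, ∀ x, |h x| ≤ M)
    (f g : ℕ → E → ℝ) (hfg : ∀ n, (f n, g n) ∈ A)
    (happrox : Tendsto (fun n => ⨆ x, |lam * f n x - g n x - h x|) atTop (nhds 0))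
    (ul ub : E → ℝ) (hul : ∃ M, ∀ x, |ul x| ≤ M) (hub : ∃ M, ∀ x, |ub x| ≤ M)
    (hsub : ∀ p ∈ A, ∀ y : ℕ → E,
      Tendsto (fun n => ul (y n) - p.1 (y n)) atTop (nhds (⨆ x, (ul x - p.1 x))) →
      limsup (fun n => lam * ul (y n) - p.2 (y n) - h (y n)) atTop ≤ 0)
    (hsup : ∀ p ∈ A, ∀ y : ℕ → E,
      Tendsto (fun n => ub (y n) - p.1 (y n)) atTop (nhds (⨅ x, (ub x - p.1 x))) →
      0 ≤ liminf (fun n => lam * ub (y n) - p.2 (y n) - h (y n)) atTop) :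
    ∀ x, ul x ≤ ub x := by
  obtain ⟨Mu, hMu⟩ := hul
  obtain ⟨Mb, hMb⟩ := hub
  obtain ⟨Mh, hMh⟩ := hh
  intro x
  set ε : ℕ → ℝ := fun n => ⨆ z, |lam * f n z - g n z - h z| with hε
  have key : ∀ n, lam * (ul x - ub x) ≤ 2 * ε n := by
    intro n
    obtain ⟨⟨Mf, hMf'⟩, ⟨Mg, hMg'⟩⟩ := hA _ (hfg n)
    have hMf : ∀ z, |f n z| ≤ Mf := hMf'
    have hMg : ∀ z, |g n z| ≤ Mg := hMg'
    -- pointwise bound by ε n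
    have hbddε : BddAbove (Set.range fun z => |lam * f n z - g n z - h z|) := by
      refine ⟨lam * Mf + Mg + Mh, ?_⟩
      rintro v ⟨z, rfl⟩
      have h1 := abs_le.mp (hMf z); have h2 := abs_le.mp (hMg z); have h3 := abs_le.mp (hMh z)
      dsimp only
      refine abs_le.mpr ⟨by nlinarith, by nlinarith⟩
    have hεb : ∀ z, |lam * f n z - g n z - h z| ≤ ε n := fun z => le_ciSup hbddε z
    -- subsolution side
    have hbS : BddAbove (Set.range fun z => ul z - f n z) := by
      refine ⟨Mu + Mf, ?_⟩
      rintro v ⟨z, rfl⟩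
      have h1 := abs_le.mp (hMu z); have h2 := abs_le.mp (hMf z)
      dsimp only; linarith
    obtain ⟨y, hy⟩ := seq_sup (fun z => ul z - f n z) hbS
    have hls := hsub (f n, g n) (hfg n) y hy
    have ht : Tendsto (fun k => lam * (ul (y k) - f n (y k))) atTop
        (nhds (lam * ⨆ z, ul z - f n z)) := hy.const_mul lam
    have hbc : IsBoundedUnder (· ≤ ·) atTop (fun k => lam * ul (y k) - g n (y k) - h (y k)) := by
      refine isBoundedUnder_of ⟨lam * Mu + Mg + Mh, fun k => ?_⟩
      have h1 := abs_le.mp (hMu (y k)); have h2 := abs_le.mp (hMg (y k))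
      have h3 := abs_le.mp (hMh (y k))
      nlinarith
    have hS : lam * (⨆ z, ul z - f n z) ≤ ε n := by
      refine le_of_forall_pos_le_add fun δ hδ => ?_
      have hev : ∀ᶠ k in atTop, lam * ul (y k) - g n (y k) - h (y k) < δ :=
        eventually_lt_of_limsup_lt (lt_of_le_of_lt hls hδ) hbc
      refine le_of_tendsto ht (hev.mono fun k hk => ?_)
      have h1 := (abs_le.mp (hεb (y k))).1
      nlinarith
    -- supersolution side
    have hbI : BddBelow (Set.range fun z => ub z - f n z) := by
      refine ⟨-(Mb + Mf), ?_⟩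
      rintro v ⟨z, rfl⟩
      have h1 := abs_le.mp (hMb z); have h2 := abs_le.mp (hMf z)
      dsimp only; linarith
    obtain ⟨w, hw⟩ := seq_inf (fun z => ub z - f n z) hbI
    have hli := hsup (f n, g n) (hfg n) w hw
    have ht' : Tendsto (fun k => lam * (ub (w k) - f n (w k))) atTop
        (nhds (lam * ⨅ z, ub z - f n z)) := hw.const_mul lam
    have hbc' : IsBoundedUnder (· ≥ ·) atTop (fun k => lam * ub (w k) - g n (w k) - h (w k)) := by
      refine isBoundedUnder_of ⟨-(lam * Mb + Mg + Mh), fun k => ?_⟩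
      have h1 := abs_le.mp (hMb (w k)); have h2 := abs_le.mp (hMg (w k))
      have h3 := abs_le.mp (hMh (w k))
      simp only [ge_iff_le]; nlinarith
    have hI : -(ε n) ≤ lam * (⨅ z, ub z - f n z) := by
      refine le_of_forall_pos_le_add fun δ hδ => ?_
      have hlt : (-δ : ℝ) < liminf (fun k => lam * ub (w k) - g n (w k) - h (w k)) atTop :=
        lt_of_lt_of_le (by linarith) hli
      have hev : ∀ᶠ k in atTop, -δ < lam * ub (w k) - g n (w k) - h (w k) :=
        eventually_lt_of_lt_liminf hlt hbc'
      have hge : -(ε n) - δ ≤ lam * (⨅ z, ub z - f n z) := by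
        refine ge_of_tendsto ht' (hev.mono fun k hk => ?_)
        have h1 := (abs_le.mp (hεb (w k))).2
        nlinarith
      linarith
    -- combine
    have hx1 : ul x - f n x ≤ ⨆ z, ul z - f n z := le_ciSup hbS x
    have hx2 : (⨅ z, ub z - f n z) ≤ ub x - f n x := ciInf_le hbI x
    have e1 : lam * (ul x - f n x) ≤ lam * ⨆ z, ul z - f n z :=
      mul_le_mul_of_nonneg_left hx1 hlam.le
    have e2 : lam * (⨅ z, ub z - f n z) ≤ lam * (ub x - f n x) :=
      mul_le_mul_of_nonneg_left hx2 hlam.le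
    nlinarith
  have h2ε : Tendsto (fun n => 2 * ε n) atTop (nhds 0) := by
    have := happrox.const_mul (2:ℝ)
    simpa [mul_comm] using this
  have hfin : lam * (ul x - ub x) ≤ 0 := ge_of_tendsto' h2ε key
  nlinarith
end

section
/- Let Π_μ denote the set of laws of càdlàg solutions of the martingale problem for A with initial distribution μ, assumed nonempty and compact for each μ, with ∪_{μ∈K} Π_μ compact for compact K ⊆ P(E). If μ_n → μ weakly in P(E), then limsup_n π₊(μ_n) ≤ π₊(μ), where π₊(ν) = sup_{P ∈ Π_ν} E^P[∫₀^∞ e^{-λt} h(X(t)) dt] for fixed h ∈ C_b(E) and λ > 0. -/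
/-!
Let `F ν` be the set of solution laws with initial law `ν`. The sets `F ν` are pairwise disjoint,
since a law determines its initial distribution, and `⋃ ν ∈ K, F ν` is compact for compact `K`.
Choose a maximizer `Q n` of the continuous functional `g` on the compact set `F (μ n)`. Every
cluster point of `Q` lies in `F ν` for some `ν` that belongs to every tail `{μ} ∪ {μ j | j ≥ N}`,
so `ν = μ`; hence `Q` converges to the compact set `F μ`, and eventually `g (Q n) < sup g (F μ) + ε`.
-/

open MeasureTheory Filter Set Topology Function
open scoped BoundedContinuousFunction

section BiSup

variable {α β : Type*} [ConditionallyCompleteLattice α] {s t : Set β} {g : β → α}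

theorem BddAbove.iUnion_range_of_image (h : BddAbove (g '' t)) :
    BddAbove (⋃ P, range fun _ : P ∈ t => g P) :=
  h.mono <| by
    rintro _ ⟨_, ⟨P, rfl⟩, hP, rfl⟩
    exact mem_image_of_mem g hP

theorem le_biSup_of_bddAbove_image (h : BddAbove (g '' t)) {P : β} (hP : P ∈ t) :
    g P ≤ ⨆ P ∈ t, g P :=
  le_ciSup₂ (f := fun P (_ : P ∈ t) => g P) h.iUnion_range_of_image P hP

/-- For `P ∉ s` the inner supremum is the junk value `sSup ∅`; `hst` then provides some `P' ∉ t`,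
whose junk term already occurs in `⨆ P ∈ t, g P ≤ c`. -/
theorem biSup_le_of_forall_le {c : α} (hs : s.Nonempty) (hst : t = univ → s = univ)
    (ht : BddAbove (g '' t)) (hle : ∀ P ∈ s, g P ≤ c) (hc : ⨆ P ∈ t, g P ≤ c) :
    ⨆ P ∈ s, g P ≤ c := by
  have : Nonempty β := ⟨hs.some⟩
  refine ciSup_le fun P => ?_
  by_cases hP : P ∈ s
  · rw [ciSup_pos hP]
    exact hle P hP
  · obtain ⟨P', hP'⟩ := (ne_univ_iff_exists_notMem t).1 fun htu => hP (hst htu ▸ mem_univ P)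
    calc ⨆ _ : P ∈ s, g P = ⨆ _ : P' ∈ t, g P' := by rw [ciSup_neg hP, ciSup_neg hP']
      _ ≤ ⨆ P ∈ t, g P := le_ciSup ht.iUnion_range_of_image.range_iSup_of_iUnion_range P'
      _ ≤ c := hc

end BiSup

section Fibres

variable {α β : Type*} [TopologicalSpace α] [TopologicalSpace β] {F : α → Set β}

theorem exists_mem_fibre_of_mapClusterPt [T2Space β]
    (hcomp : ∀ K, IsCompact K → IsCompact (⋃ ν ∈ K, F ν)) {ι : Type*} {l : Filter ι}
    {u : ι → α} {Q : ι → β} (hQ : ∀ i, Q i ∈ F (u i)) {K : Set α} (hK : IsCompact K)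
    (huK : ∀ᶠ i in l, u i ∈ K) {P : β} (hP : MapClusterPt P l Q) : ∃ ν ∈ K, P ∈ F ν := by
  simpa only [mem_iUnion₂, exists_prop] using (hcomp K hK).isClosed.mem_of_mapClusterPt hP <|
    huK.mono fun i hi => mem_biUnion hi (hQ i)

variable [T1Space α] [T2Space β] (hF : Pairwise (Disjoint on F))
  (hcomp : ∀ K, IsCompact K → IsCompact (⋃ ν ∈ K, F ν))
  {u : ℕ → α} {a : α} (hu : Tendsto u atTop (𝓝 a)) {Q : ℕ → β} (hQ : ∀ n, Q n ∈ F (u n))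
include hF hcomp hu hQ

theorem mem_of_mapClusterPt_of_tendsto {P : β} (hP : MapClusterPt P atTop Q) : P ∈ F a := by
  have tail (N : ℕ) : ∃ ν ∈ insert a (range fun j => u (j + N)), P ∈ F ν :=
    exists_mem_fibre_of_mapClusterPt hcomp hQ
      (hu.comp (tendsto_add_atTop_nat N)).isCompact_insert_range
      (eventually_atTop.2 ⟨N, fun n hn => mem_insert_of_mem _ ⟨n - N, by simp [hn]⟩⟩) hP
  obtain ⟨ν, -, hPν⟩ := tail 0
  obtain rfl | hνa := eq_or_ne ν a
  · exact hPν
  obtain ⟨N, hN⟩ := eventually_atTop.1 (hu.eventually_ne hνa.symm)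
  obtain ⟨ν', hν', hPν'⟩ := tail N
  obtain rfl : ν' = ν := hF.eq (not_disjoint_iff.2 ⟨P, hPν', hPν⟩)
  rcases hν' with rfl | ⟨j, rfl⟩
  · exact hPν'
  · exact absurd rfl (hN (j + N) (Nat.le_add_left N j))

theorem tendsto_nhdsSet_fibre_of_tendsto : Tendsto Q atTop (𝓝ˢ (F a)) :=
  (hcomp _ hu.isCompact_insert_range).tendsto_nhdsSet_of_mapClusterPt
    (Eventually.of_forall fun n => mem_biUnion (mem_insert_of_mem _ (mem_range_self n)) (hQ n))
    fun _ _ hP => mem_of_mapClusterPt_of_tendsto hF hcomp hu hQ hP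

end Fibres

theorem limsup_biSup_fibre_le {α β : Type*} [TopologicalSpace α] [T1Space α]
    [TopologicalSpace β] [T2Space β] {F : α → Set β} (hF : Pairwise (Disjoint on F))
    (hne : ∀ ν, (F ν).Nonempty) (hcomp : ∀ K, IsCompact K → IsCompact (⋃ ν ∈ K, F ν))
    {g : β → ℝ} (hg : Continuous g) {u : ℕ → α} {a : α} (hu : Tendsto u atTop (𝓝 a)) :
    limsup (fun n => ⨆ P ∈ F (u n), g P) atTop ≤ ⨆ P ∈ F a, g P := by
  have hFc (ν : α) : IsCompact (F ν) := by simpa using hcomp {ν} isCompact_singleton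
  have hbdd (ν : α) : BddAbove (g '' F ν) := (hFc ν).bddAbove_image hg.continuousOn
  choose Q hQ hQmax using fun n => (hFc (u n)).exists_isMaxOn (hne (u n)) hg.continuousOn
  have huniv (ν : α) (ha : F a = univ) : F ν = univ := by
    obtain ⟨P, hP⟩ := hne ν
    obtain rfl : ν = a := hF.eq (not_disjoint_iff.2 ⟨P, hP, ha ▸ mem_univ P⟩)
    exact ha
  have heventually (ε : ℝ) (hε : 0 < ε) :
      ∀ᶠ n in atTop, ⨆ P ∈ F (u n), g P ≤ (⨆ P ∈ F a, g P) + ε := by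
    have hnhds : {P | g P < (⨆ P ∈ F a, g P) + ε} ∈ 𝓝ˢ (F a) :=
      (isOpen_lt hg continuous_const).mem_nhdsSet.2 fun P hP =>
        (le_biSup_of_bddAbove_image (hbdd a) hP).trans_lt (lt_add_of_pos_right _ hε)
    filter_upwards [tendsto_nhdsSet_fibre_of_tendsto hF hcomp hu hQ hnhds] with n hn
    exact biSup_le_of_forall_le (hne _) (huniv _) (hbdd a) (fun P hP => (hQmax n hP).trans hn.le)
      (le_add_of_nonneg_right hε.le)
  obtain ⟨m, hm⟩ := (hcomp _ hu.isCompact_insert_range).bddBelow_image hg.continuousOn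
  have hcobdd : IsCoboundedUnder (· ≤ ·) atTop fun n => ⨆ P ∈ F (u n), g P :=
    isCoboundedUnder_le_of_le atTop fun n =>
      (hm ⟨Q n, mem_biUnion (mem_insert_of_mem _ (mem_range_self n)) (hQ n), rfl⟩).trans
        (le_biSup_of_bddAbove_image (hbdd (u n)) (hQ n))
  exact le_of_forall_pos_le_add fun ε hε => limsup_le_of_le hcobdd (heventually ε hε)

theorem stmt12_general {E Ω : Type*} [MetricSpace E] [MeasurableSpace E] [BorelSpace E]
    [MetricSpace Ω] [MeasurableSpace Ω] [BorelSpace Ω]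
    (X : ℝ → Ω → E)  -- the canonical process on the path space Ω = D_E[0,∞)
    (Φ : Ω → ℝ)
    (hΦc : Continuous Φ) (hΦb : ∃ C, ∀ ω, |Φ ω| ≤ C)
    (Pi : ProbabilityMeasure E → Set (ProbabilityMeasure Ω))
    (hne : ∀ μ, (Pi μ).Nonempty)
    (hinit : ∀ μ, ∀ P ∈ Pi μ, (P : Measure Ω).map (X 0) = (μ : Measure E))
    (hcomp : ∀ K : Set (ProbabilityMeasure E), IsCompact K → IsCompact (⋃ μ ∈ K, Pi μ))
    (μn : ℕ → ProbabilityMeasure E) (μ : ProbabilityMeasure E)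
    (hconv : Tendsto μn atTop (nhds μ)) :
    limsup (fun n => ⨆ P ∈ Pi (μn n), ∫ ω, Φ ω ∂(P : Measure Ω)) atTop
      ≤ ⨆ P ∈ Pi μ, ∫ ω, Φ ω ∂(P : Measure Ω) := by
  obtain ⟨C, hC⟩ := hΦb
  let Φb : Ω →ᵇ ℝ := .ofNormedAddCommGroup Φ hΦc C fun ω => (Real.norm_eq_abs _).trans_le (hC ω)
  have hdisj : Pairwise (Disjoint on Pi) := fun ν ν' hνν' =>
    disjoint_left.2 fun P hP hP' =>
      hνν' (ProbabilityMeasure.toMeasure_injective ((hinit ν P hP).symm.trans (hinit ν' P hP')))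
  exact limsup_biSup_fibre_le hdisj hne hcomp
    (ProbabilityMeasure.continuous_integral_boundedContinuousFunction Φb) hconv

/-- upper semicontinuity of `μ ↦ π₊(μ)` (the supremum over the compact set
`Π_μ` of laws of solutions with initial distribution `μ` of the resolvent functional
`Φ(ω) = ∫₀^∞ e^{-λt} h(X(t,ω)) dt` on the path space `Ω = D_E[0,∞)`). -/
theorem stmt12 {E Ω : Type*} [MetricSpace E] [MeasurableSpace E] [BorelSpace E]
    [MetricSpace Ω] [MeasurableSpace Ω] [BorelSpace Ω]
    (X : ℝ → Ω → E)  -- the canonical process on the path space Ω = D_E[0,∞)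
    (lam : ℝ) (hlam : 0 < lam)
    (h : E → ℝ) (hh : Continuous h) (hhb : ∃ C, ∀ x, |h x| ≤ C)
    (Φ : Ω → ℝ) (hΦ : ∀ ω, Φ ω = ∫ t in Set.Ioi (0:ℝ), Real.exp (-(lam * t)) * h (X t ω))
    (hΦc : Continuous Φ) (hΦb : ∃ C, ∀ ω, |Φ ω| ≤ C)
    (Pi : ProbabilityMeasure E → Set (ProbabilityMeasure Ω))
    (hne : ∀ μ, (Pi μ).Nonempty)
    (hinit : ∀ μ, ∀ P ∈ Pi μ, (P : Measure Ω).map (X 0) = (μ : Measure E))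
    (hcomp : ∀ K : Set (ProbabilityMeasure E), IsCompact K → IsCompact (⋃ μ ∈ K, Pi μ))
    (μn : ℕ → ProbabilityMeasure E) (μ : ProbabilityMeasure E)
    (hconv : Tendsto μn atTop (nhds μ)) :
    limsup (fun n => ⨆ P ∈ Pi (μn n), ∫ ω, Φ ω ∂(P : Measure Ω)) atTop
      ≤ ⨆ P ∈ Pi μ, ∫ ω, Φ ω ∂(P : Measure Ω) :=
  stmt12_general X Φ hΦc hΦb Pi hne hinit hcomp μn μ hconv
end
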